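/- Fix p_gen, p_swap ∈ (0,1], and let (f_n) and (f_n^up) be the waiting-time distributions of the SWAP-ONLY protocol and its dominating sequential variant, with cumulative sums F_n and F_n^up. Then for every n ≥ 0 and every truncation time t_trunc ∈ ℕ, the difference between the real mean and the empirical mean of the waiting time T_n is bounded as 0 ≤ E[f_n] − Σ_{t=1}^{t_trunc} (1 − F_n(t−1)) ≤ (2/p_swap)^n·(1/p_gen) − Σ_{t=1}^{t_trunc} (1 − F_n^up(t−1)), and the two bounds coincide in the limit t_trunc → ∞. -/

import Mathlib

/-!
Since `X + Y ≥ max X Y`, and convolution and geometric compounding preserve the pointwise order of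
distribution functions, induction on `n` gives `F_n^up ≤ F_n`: the tails `1 − F_n(t)` are
dominated by the tails `1 − F_n^up(t)`, so the remainders of the tail series beyond `t_trunc` are
ordered as well. The dominating mean is computed exactly: the mean of `a * b` is `E[a] + E[b]`,
and by Wald's identity a geometric compound sum with parameter `p` has mean `E[m] / p`, whence
`E[f_n^up] = (2 / p_swap)^n / p_gen`.
-/

noncomputable section

namespace RepeaterChain

/-- Convolution of two functions on `ℕ`: `(a*b)(t) = Σ_{s=0}^{t} a(s)·b(t−s)`. -/
def conv (a b : ℕ → ℝ) : ℕ → ℝ := fun t => ∑ s ∈ Finset.range (t + 1), a s * b (t - s)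

/-- `convPow m k` is the `k`-fold convolution `m^{*k}` of `m` with itself
(`convPow m 0` is the convolution identity, the delta at `0`, and `convPow m 1 = m`). -/
def convPow (m : ℕ → ℝ) : ℕ → ℕ → ℝ
  | 0 => fun t => if t = 0 then 1 else 0
  | k + 1 => conv (convPow m k) m

/-- Cumulative sums: `F(t) = Σ_{s=0}^{t} f(s)`. -/
def cum (f : ℕ → ℝ) : ℕ → ℝ := fun t => ∑ s ∈ Finset.range (t + 1), f s

/-- The geometric distribution with parameter `p`, supported on `{1, 2, …}`:
`f(0) = 0` and `f(t) = p·(1−p)^{t−1}` for `t ≥ 1`. -/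
def geomPMF (p : ℝ) : ℕ → ℝ := fun t => if t = 0 then 0 else p * (1 - p) ^ (t - 1)

/-- Distribution of the maximum of two i.i.d. copies of a variable with pmf `f`:
`m(0) = 0` and `m(t) = F(t)² − F(t−1)²` for `t ≥ 1`. -/
def maxPMF (f : ℕ → ℝ) : ℕ → ℝ :=
  fun t => if t = 0 then 0 else cum f t ^ 2 - cum f (t - 1) ^ 2

/-- Distribution of the geometric compound sum with parameter `p` of summands with pmf `m`:
`t ↦ Σ_{k=1}^{∞} p·(1−p)^{k−1}·m^{*k}(t)` (the sum over `k ≥ 1` written via `k ↦ k + 1`). -/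
def geomCompound (p : ℝ) (m : ℕ → ℝ) : ℕ → ℝ :=
  fun t => ∑' k : ℕ, p * (1 - p) ^ k * convPow m (k + 1) t

/-- The waiting-time distribution `f_n` of `T_n` for the SWAP-ONLY protocol on a `2^n`-segment
repeater chain: `f_0` is geometric with parameter `p_gen`, and `f_{n+1}` is the geometric compound
sum (parameter `p_swap`) of copies of the maximum of two i.i.d. copies of `T_n`. -/
def fSwap (pgen pswap : ℝ) : ℕ → ℕ → ℝ
  | 0 => geomPMF pgen
  | n + 1 => geomCompound pswap (maxPMF (fSwap pgen pswap n))

/-- The waiting-time distribution `f_n^up` of the dominating sequential variant `T_n^upper`,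
in which the two links at every swap level are produced sequentially rather than in parallel:
`f_0^up = f_0`, and `f_{n+1}^up` is the geometric compound sum (parameter `p_swap`) of copies of
the sum of two i.i.d. copies of `T_n^upper`. -/
def fUp (pgen pswap : ℝ) : ℕ → ℕ → ℝ
  | 0 => geomPMF pgen
  | n + 1 => geomCompound pswap (conv (fUp pgen pswap n) (fUp pgen pswap n))

end RepeaterChain

open Finset Filter Topology

theorem hasSum_tsum_swap_of_nonneg {β γ : Type*} {f : β → γ → ℝ} {g : β → ℝ} {s : ℝ}
    (hf : ∀ b c, 0 ≤ f b c) (hfg : ∀ b, HasSum (f b) (g b)) (hg : HasSum g s) :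
    HasSum (fun c => ∑' b, f b c) s := by
  have hF : Summable (Function.uncurry f) :=
    (summable_prod_of_nonneg fun q => hf q.1 q.2).2
      ⟨fun b => (hfg b).summable, hg.summable.congr fun b => ((hfg b).tsum_eq).symm⟩
  have hFs : HasSum (Function.uncurry f) s := by
    rw [← (hF.hasSum.prod_fiberwise hfg).unique hg]
    exact hF.hasSum
  have hswap : HasSum (Function.uncurry f ∘ Equiv.prodComm γ β) s :=
    (Equiv.hasSum_iff _).2 hFs
  exact hswap.prod_fiberwise fun c => ((hswap.summable.prod_factor c).hasSum)

namespace RepeaterChain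

variable {a b a' b' f m m' : ℕ → ℝ}

/-- For the pmf `f` of `T`, `tail f t = P(T > t)`; with this shift of index `∑ₜ tail f t` is the
mean `E[f] = Σ_{t ≥ 1} (1 − F(t−1))`. -/
def tail (f : ℕ → ℝ) (t : ℕ) : ℝ := 1 - cum f t

structure IsPMF (f : ℕ → ℝ) : Prop where
  nonneg : ∀ t, 0 ≤ f t
  hasSum_one : HasSum f 1

lemma cum_succ (f : ℕ → ℝ) (t : ℕ) : cum f (t + 1) = cum f t + f (t + 1) :=
  sum_range_succ f (t + 1)

lemma cum_mono (hf : ∀ t, 0 ≤ f t) : Monotone (cum f) := fun _ _ hst =>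
  sum_le_sum_of_subset_of_nonneg (range_subset_range.2 (by omega)) fun s _ _ => hf s

lemma tendsto_cum {α : ℝ} (hf : HasSum f α) : Tendsto (cum f) atTop (𝓝 α) :=
  (tendsto_add_atTop_iff_nat 1).2 hf.tendsto_sum_nat

lemma hasSum_of_tendsto_cum {α : ℝ} (hf : ∀ t, 0 ≤ f t) (h : Tendsto (cum f) atTop (𝓝 α)) :
    HasSum f α :=
  (hasSum_iff_tendsto_nat_of_nonneg hf α).2 ((tendsto_add_atTop_iff_nat 1).1 h)

namespace IsPMF

lemma cum_le_one (hf : IsPMF f) (t : ℕ) : cum f t ≤ 1 :=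
  sum_le_hasSum _ (fun s _ => hf.nonneg s) hf.hasSum_one

lemma le_one (hf : IsPMF f) (t : ℕ) : f t ≤ 1 :=
  le_hasSum hf.hasSum_one t fun s _ => hf.nonneg s

lemma cum_nonneg (hf : IsPMF f) (t : ℕ) : 0 ≤ cum f t :=
  sum_nonneg fun s _ => hf.nonneg s

lemma tail_nonneg (hf : IsPMF f) (t : ℕ) : 0 ≤ tail f t :=
  sub_nonneg.2 (hf.cum_le_one t)

end IsPMF

lemma conv_comm (a b : ℕ → ℝ) : conv a b = conv b a := by
  ext t
  rw [conv, conv, ← Nat.sum_antidiagonal_eq_sum_range_succ_mk (fun q => a q.1 * b q.2),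
    ← Nat.sum_antidiagonal_eq_sum_range_succ_mk (fun q => b q.1 * a q.2),
    ← Nat.sum_antidiagonal_swap]
  simp [mul_comm]

lemma cum_conv (a b : ℕ → ℝ) (t : ℕ) :
    cum (conv a b) t = ∑ s ∈ range (t + 1), a s * cum b (t - s) := by
  simp only [cum, conv, mul_sum]
  rw [sum_range_diag_flip (t + 1) fun i j => a i * b j]
  refine sum_congr rfl fun s hs => ?_
  rw [show t + 1 - s = t - s + 1 by have := mem_range.1 hs; omega]

lemma hasSum_conv {α β : ℝ} (ha : HasSum a α) (hb : HasSum b β) :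
    HasSum (conv a b) (α * β) := by
  have := hasSum_sum_range_mul_of_summable_norm ha.summable.norm hb.summable.norm
  rwa [ha.tsum_eq, hb.tsum_eq] at this

lemma conv_nonneg (ha : ∀ t, 0 ≤ a t) (hb : ∀ t, 0 ≤ b t) (t : ℕ) : 0 ≤ conv a b t :=
  sum_nonneg fun s _ => mul_nonneg (ha s) (hb _)

lemma IsPMF.conv (ha : IsPMF a) (hb : IsPMF b) : IsPMF (conv a b) where
  nonneg := conv_nonneg ha.nonneg hb.nonneg
  hasSum_one := by simpa using hasSum_conv ha.hasSum_one hb.hasSum_one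

lemma tail_conv (a b : ℕ → ℝ) (t : ℕ) :
    tail (conv a b) t = tail a t + conv a (tail b) t := by
  have : conv a (tail b) t = cum a t - cum (conv a b) t := by
    rw [cum_conv]
    simp only [RepeaterChain.conv, tail, mul_sub, mul_one, sum_sub_distrib, cum]
  rw [this, tail, tail]
  ring

lemma hasSum_tail_conv {α A B : ℝ} (ha : HasSum a α) (hta : HasSum (tail a) A)
    (htb : HasSum (tail b) B) : HasSum (tail (conv a b)) (A + α * B) := by
  simpa only [← tail_conv] using hta.add (hasSum_conv ha htb)

lemma cum_conv_le_mul (ha : ∀ t, 0 ≤ a t) (hb : ∀ t, 0 ≤ b t) (t : ℕ) :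
    cum (conv a b) t ≤ cum a t * cum b t := by
  rw [cum_conv, cum, sum_mul]
  exact sum_le_sum fun s _ => mul_le_mul_of_nonneg_left (cum_mono hb (Nat.sub_le t s)) (ha s)

lemma cum_conv_mono_right (ha : ∀ t, 0 ≤ a t) (hb : ∀ t, cum b' t ≤ cum b t) (t : ℕ) :
    cum (conv a b') t ≤ cum (conv a b) t := by
  rw [cum_conv, cum_conv]
  exact sum_le_sum fun s _ => mul_le_mul_of_nonneg_left (hb _) (ha s)

lemma cum_conv_mono (ha' : ∀ t, 0 ≤ a' t) (hb : ∀ t, 0 ≤ b t)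
    (ha : ∀ t, cum a' t ≤ cum a t) (hb' : ∀ t, cum b' t ≤ cum b t) (t : ℕ) :
    cum (conv a' b') t ≤ cum (conv a b) t :=
  calc cum (conv a' b') t ≤ cum (conv a' b) t := cum_conv_mono_right ha' hb' t
    _ = cum (conv b a') t := by rw [conv_comm]
    _ ≤ cum (conv b a) t := cum_conv_mono_right hb ha t
    _ = cum (conv a b) t := by rw [conv_comm]

lemma cum_convPow_zero (m : ℕ → ℝ) (t : ℕ) : cum (convPow m 0) t = 1 := by
  simp [cum, convPow]

lemma convPow_succ (m : ℕ → ℝ) (k : ℕ) : convPow m (k + 1) = conv (convPow m k) m := rfl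

lemma convPow_succ_apply_zero (hm : m 0 = 0) (k : ℕ) : convPow m (k + 1) 0 = 0 := by
  simp [convPow_succ, RepeaterChain.conv, hm]

lemma convPow_nonneg (hm : ∀ t, 0 ≤ m t) (k t : ℕ) : 0 ≤ convPow m k t := by
  induction k generalizing t with
  | zero => simp only [convPow]; positivity
  | succ k ih => exact conv_nonneg ih hm t

lemma hasSum_convPow (hm : HasSum m 1) (k : ℕ) : HasSum (convPow m k) 1 := by
  induction k with
  | zero => exact hasSum_ite_eq 0 1
  | succ k ih => simpa [convPow_succ] using hasSum_conv ih hm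

lemma IsPMF.convPow (hm : IsPMF m) (k : ℕ) : IsPMF (convPow m k) :=
  ⟨convPow_nonneg hm.nonneg k, hasSum_convPow hm.hasSum_one k⟩

lemma hasSum_tail_convPow {μ : ℝ} (hm : HasSum m 1) (htm : HasSum (tail m) μ) (k : ℕ) :
    HasSum (tail (convPow m k)) (k * μ) := by
  induction k with
  | zero =>
    have : tail (convPow m 0) = 0 := funext fun t => by simp [tail, cum_convPow_zero]
    rw [this, Nat.cast_zero, zero_mul]
    exact hasSum_zero
  | succ k ih =>
    rw [convPow_succ]
    convert hasSum_tail_conv (hasSum_convPow hm k) ih htm using 1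
    push_cast
    ring

lemma cum_convPow_mono (hm' : ∀ t, 0 ≤ m' t) (hm : ∀ t, 0 ≤ m t)
    (h : ∀ t, cum m' t ≤ cum m t) (k t : ℕ) :
    cum (convPow m' k) t ≤ cum (convPow m k) t := by
  induction k generalizing t with
  | zero => rfl
  | succ k ih => exact cum_conv_mono (convPow_nonneg hm' k) hm ih h t

lemma cum_maxPMF (h0 : f 0 = 0) (t : ℕ) : cum (maxPMF f) t = cum f t ^ 2 := by
  induction t with
  | zero => simp [cum, maxPMF, h0]
  | succ t ih => simp [cum_succ, ih, maxPMF]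

lemma IsPMF.maxPMF (hf : IsPMF f) (h0 : f 0 = 0) : IsPMF (maxPMF f) := by
  have nonneg (t : ℕ) : 0 ≤ RepeaterChain.maxPMF f t := by
    rcases t with _ | t
    · simp [RepeaterChain.maxPMF]
    · simpa [RepeaterChain.maxPMF] using
        pow_le_pow_left₀ (hf.cum_nonneg t) (cum_mono hf.nonneg t.le_succ) 2
  refine ⟨nonneg, hasSum_of_tendsto_cum nonneg ?_⟩
  simpa [funext (cum_maxPMF h0)] using (tendsto_cum hf.hasSum_one).pow 2

lemma tail_geomPMF (p : ℝ) (t : ℕ) : tail (geomPMF p) t = (1 - p) ^ t := by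
  induction t with
  | zero => simp [tail, cum, geomPMF]
  | succ t ih =>
    rw [tail, cum_succ] at *
    simp only [geomPMF, Nat.add_sub_cancel, if_neg t.succ_ne_zero]
    linear_combination ih

lemma isPMF_geomPMF {p : ℝ} (hp0 : 0 < p) (hp1 : p ≤ 1) : IsPMF (geomPMF p) := by
  have nonneg (t : ℕ) : 0 ≤ geomPMF p t := by
    unfold geomPMF
    split_ifs
    · rfl
    · exact mul_nonneg hp0.le (pow_nonneg (by linarith) _)
  refine ⟨nonneg, hasSum_of_tendsto_cum nonneg ?_⟩
  have : Tendsto (fun t => 1 - tail (geomPMF p) t) atTop (𝓝 (1 - 0)) := by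
    simpa only [tail_geomPMF] using
      tendsto_const_nhds.sub (tendsto_pow_atTop_nhds_zero_of_lt_one (by linarith) (by linarith))
  simpa [tail] using this

lemma hasSum_tail_geomPMF {p : ℝ} (hp0 : 0 < p) (hp1 : p ≤ 1) :
    HasSum (tail (geomPMF p)) (1 / p) := by
  simpa [funext (tail_geomPMF p)] using
    hasSum_geometric_of_lt_one (r := 1 - p) (by linarith) (by linarith)

section geomCompound

variable {p : ℝ}

lemma geom_weight_nonneg (hp0 : 0 ≤ p) (hp1 : p ≤ 1) (k : ℕ) : 0 ≤ p * (1 - p) ^ k :=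
  mul_nonneg hp0 (pow_nonneg (by linarith) k)

lemma hasSum_geom_weight (hp0 : 0 < p) (hp1 : p ≤ 1) :
    HasSum (fun k : ℕ => p * (1 - p) ^ k) 1 := by
  have := (hasSum_geometric_of_lt_one (r := 1 - p) (by linarith) (by linarith)).mul_left p
  rwa [sub_sub_cancel, mul_inv_cancel₀ hp0.ne'] at this

lemma hasSum_geom_weight_mul_succ (hp0 : 0 < p) (hp1 : p ≤ 1) :
    HasSum (fun k : ℕ => p * (1 - p) ^ k * (k + 1)) (1 / p) := by
  have hr : ‖1 - p‖ < 1 := by rw [Real.norm_eq_abs, abs_lt]; constructor <;> linarith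
  have h := ((hasSum_coe_mul_geometric_of_norm_lt_one hr).add
    (hasSum_geometric_of_lt_one (r := 1 - p) (by linarith) (by linarith))).mul_left p
  have hv : p * ((1 - p) / (1 - (1 - p)) ^ 2 + (1 - (1 - p))⁻¹) = 1 / p := by
    rw [sub_sub_cancel]
    field_simp
    ring
  rw [hv] at h
  exact h.congr_fun fun k => by ring

lemma summable_geom_weight_mul (hp0 : 0 < p) (hp1 : p ≤ 1) {c : ℕ → ℝ} (hc0 : ∀ k, 0 ≤ c k)
    (hc1 : ∀ k, c k ≤ 1) : Summable fun k : ℕ => p * (1 - p) ^ k * c k :=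
  (hasSum_geom_weight hp0 hp1).summable.of_nonneg_of_le
    (fun k => mul_nonneg (geom_weight_nonneg hp0.le hp1 k) (hc0 k))
    (fun k => mul_le_of_le_one_right (geom_weight_nonneg hp0.le hp1 k) (hc1 k))

lemma geomCompound_apply_zero (hm : m 0 = 0) : geomCompound p m 0 = 0 := by
  simp [geomCompound, convPow_succ_apply_zero hm]

lemma hasSum_cum_geomCompound (hp0 : 0 < p) (hp1 : p ≤ 1) (hm : IsPMF m) (t : ℕ) :
    HasSum (fun k : ℕ => p * (1 - p) ^ k * cum (convPow m (k + 1)) t)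
      (cum (geomCompound p m) t) := by
  have hterm (s : ℕ) : HasSum (fun k : ℕ => p * (1 - p) ^ k * convPow m (k + 1) s)
      (geomCompound p m s) :=
    (summable_geom_weight_mul hp0 hp1 (fun k => (hm.convPow _).nonneg s)
      fun k => (hm.convPow _).le_one s).hasSum
  simpa only [cum, mul_sum] using hasSum_sum fun s _ => hterm s

lemma hasSum_tail_geomCompound_apply (hp0 : 0 < p) (hp1 : p ≤ 1) (hm : IsPMF m) (t : ℕ) :
    HasSum (fun k : ℕ => p * (1 - p) ^ k * tail (convPow m (k + 1)) t)
      (tail (geomCompound p m) t) := by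
  simpa only [tail, mul_sub, mul_one] using
    (hasSum_geom_weight hp0 hp1).sub (hasSum_cum_geomCompound hp0 hp1 hm t)

lemma IsPMF.geomCompound (hp0 : 0 < p) (hp1 : p ≤ 1) (hm : IsPMF m) :
    IsPMF (geomCompound p m) where
  nonneg t := tsum_nonneg fun k =>
    mul_nonneg (geom_weight_nonneg hp0.le hp1 k) ((hm.convPow _).nonneg t)
  hasSum_one := hasSum_tsum_swap_of_nonneg
    (fun k t => mul_nonneg (geom_weight_nonneg hp0.le hp1 k) ((hm.convPow _).nonneg t))
    (fun k => by simpa using (hasSum_convPow hm.hasSum_one (k + 1)).mul_left (p * (1 - p) ^ k))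
    (hasSum_geom_weight hp0 hp1)

/-- Wald's identity: the number of summands is geometric with mean `1 / p`. -/
lemma hasSum_tail_geomCompound (hp0 : 0 < p) (hp1 : p ≤ 1) (hm : IsPMF m) {μ : ℝ}
    (htm : HasSum (tail m) μ) : HasSum (tail (geomCompound p m)) (μ / p) := by
  have hrow (k : ℕ) : HasSum (fun t => p * (1 - p) ^ k * tail (convPow m (k + 1)) t)
      (p * (1 - p) ^ k * (k + 1) * μ) := by
    have := (hasSum_tail_convPow hm.hasSum_one htm (k + 1)).mul_left (p * (1 - p) ^ k)
    rwa [Nat.cast_succ, ← mul_assoc] at this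
  have h := hasSum_tsum_swap_of_nonneg
    (fun k t => mul_nonneg (geom_weight_nonneg hp0.le hp1 k)
      ((hm.convPow (k + 1)).tail_nonneg t))
    hrow ((hasSum_geom_weight_mul_succ hp0 hp1).mul_right μ)
  rw [one_div_mul_eq_div] at h
  convert h using 1
  exact funext fun t => ((hasSum_tail_geomCompound_apply hp0 hp1 hm t).tsum_eq).symm

lemma cum_geomCompound_mono (hp0 : 0 < p) (hp1 : p ≤ 1) (hm' : IsPMF m') (hm : IsPMF m)
    (h : ∀ t, cum m' t ≤ cum m t) (t : ℕ) :
    cum (geomCompound p m') t ≤ cum (geomCompound p m) t :=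
  hasSum_le (fun k => mul_le_mul_of_nonneg_left
      (cum_convPow_mono hm'.nonneg hm.nonneg h (k + 1) t)
      (geom_weight_nonneg hp0.le hp1 k))
    (hasSum_cum_geomCompound hp0 hp1 hm' t) (hasSum_cum_geomCompound hp0 hp1 hm t)

end geomCompound

section waitingTimes

variable {pgen pswap : ℝ}

lemma fSwap_apply_zero (n : ℕ) : fSwap pgen pswap n 0 = 0 := by
  cases n with
  | zero => simp [fSwap, geomPMF]
  | succ n => exact geomCompound_apply_zero (by simp [maxPMF])

variable (hgen0 : 0 < pgen) (hgen1 : pgen ≤ 1) (hswap0 : 0 < pswap) (hswap1 : pswap ≤ 1)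
include hgen0 hgen1 hswap0 hswap1

lemma isPMF_fSwap (n : ℕ) : IsPMF (fSwap pgen pswap n) := by
  induction n with
  | zero => exact isPMF_geomPMF hgen0 hgen1
  | succ n ih => exact (ih.maxPMF (fSwap_apply_zero n)).geomCompound hswap0 hswap1

lemma isPMF_fUp (n : ℕ) : IsPMF (fUp pgen pswap n) := by
  induction n with
  | zero => exact isPMF_geomPMF hgen0 hgen1
  | succ n ih => exact (ih.conv ih).geomCompound hswap0 hswap1

lemma hasSum_tail_fUp (n : ℕ) :
    HasSum (tail (fUp pgen pswap n)) ((2 / pswap) ^ n * (1 / pgen)) := by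
  induction n with
  | zero =>
    rw [pow_zero, one_mul]
    exact hasSum_tail_geomPMF hgen0 hgen1
  | succ n ih =>
    have hu := isPMF_fUp hgen0 hgen1 hswap0 hswap1 n
    have h := hasSum_tail_geomCompound hswap0 hswap1 (hu.conv hu)
      (hasSum_tail_conv hu.hasSum_one ih ih)
    rwa [show ((2 / pswap) ^ n * (1 / pgen) + 1 * ((2 / pswap) ^ n * (1 / pgen))) / pswap
      = (2 / pswap) ^ (n + 1) * (1 / pgen) by ring] at h

lemma cum_fUp_le_cum_fSwap (n t : ℕ) : cum (fUp pgen pswap n) t ≤ cum (fSwap pgen pswap n) t := by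
  induction n generalizing t with
  | zero => rfl
  | succ n ih =>
    have hu := isPMF_fUp hgen0 hgen1 hswap0 hswap1 n
    have hw := isPMF_fSwap hgen0 hgen1 hswap0 hswap1 n
    refine cum_geomCompound_mono hswap0 hswap1 (hu.conv hu) (hw.maxPMF (fSwap_apply_zero n))
      (fun s => ?_) t
    calc cum (conv (fUp pgen pswap n) (fUp pgen pswap n)) s
        ≤ cum (fUp pgen pswap n) s * cum (fUp pgen pswap n) s :=
          cum_conv_le_mul hu.nonneg hu.nonneg s
      _ ≤ cum (fSwap pgen pswap n) s * cum (fSwap pgen pswap n) s :=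
          mul_self_le_mul_self (hu.cum_nonneg s) (ih s)
      _ = cum (maxPMF (fSwap pgen pswap n)) s := by rw [cum_maxPMF (fSwap_apply_zero n), sq]

end waitingTimes

lemma tsum_sub_sum_range_le_of_le {f g : ℕ → ℝ} {M : ℝ} (hf : ∀ t, 0 ≤ f t)
    (hfg : ∀ t, f t ≤ g t) (hg : HasSum g M) (N : ℕ) :
    ∑' t, f t - ∑ t ∈ range N, f t ≤ M - ∑ t ∈ range N, g t := by
  have hsum := (Summable.of_nonneg_of_le hf hfg hg.summable).hasSum
  have := sum_le_hasSum (range N) (fun t _ => sub_nonneg.2 (hfg t)) (hg.sub hsum)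
  rw [sum_sub_distrib] at this
  linarith

end RepeaterChain

open RepeaterChain

/-- Proposition 1: the waiting time `T_n` of the SWAP-ONLY protocol has finite mean
`E[f_n] = Σ_{t=1}^{∞} (1 − F_n(t−1))`, and for every truncation time `t_trunc` the difference
between the real mean and the empirical mean `Σ_{t=1}^{t_trunc} (1 − F_n(t−1))` is bounded as
`0 ≤ E[f_n] − Σ_{t=1}^{t_trunc} (1 − F_n(t−1))
   ≤ (2/p_swap)^n·(1/p_gen) − Σ_{t=1}^{t_trunc} (1 − F_n^up(t−1))`,
and the two bounds coincide in the limit `t_trunc → ∞` (the upper bound tends to `0`).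
(Sums over `t = 1, …, t_trunc` of `1 − F(t−1)` are written as sums over
`t ∈ Finset.range t_trunc` of `1 − F(t)`.) -/
theorem mean_bounds_fSwap (pgen pswap : ℝ)
    (hgen0 : 0 < pgen) (hgen1 : pgen ≤ 1) (hswap0 : 0 < pswap) (hswap1 : pswap ≤ 1)
    (n : ℕ) :
    Summable (fun t : ℕ => 1 - cum (fSwap pgen pswap n) t) ∧
    (∀ ttrunc : ℕ,
      0 ≤ (∑' t : ℕ, (1 - cum (fSwap pgen pswap n) t))
            - ∑ t ∈ Finset.range ttrunc, (1 - cum (fSwap pgen pswap n) t) ∧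
      (∑' t : ℕ, (1 - cum (fSwap pgen pswap n) t))
            - ∑ t ∈ Finset.range ttrunc, (1 - cum (fSwap pgen pswap n) t)
        ≤ (2 / pswap) ^ n * (1 / pgen)
            - ∑ t ∈ Finset.range ttrunc, (1 - cum (fUp pgen pswap n) t)) ∧
    Filter.Tendsto
      (fun ttrunc : ℕ =>
        (2 / pswap) ^ n * (1 / pgen)
          - ∑ t ∈ Finset.range ttrunc, (1 - cum (fUp pgen pswap n) t))
      Filter.atTop (nhds 0) := by
  have hSwap := isPMF_fSwap hgen0 hgen1 hswap0 hswap1 n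
  have hUp := hasSum_tail_fUp hgen0 hgen1 hswap0 hswap1 n
  have hle (t : ℕ) : tail (fSwap pgen pswap n) t ≤ tail (fUp pgen pswap n) t :=
    sub_le_sub_left (cum_fUp_le_cum_fSwap hgen0 hgen1 hswap0 hswap1 n t) 1
  have hSummable : Summable (tail (fSwap pgen pswap n)) :=
    hUp.summable.of_nonneg_of_le hSwap.tail_nonneg hle
  refine ⟨hSummable, fun N => ⟨?_, tsum_sub_sum_range_le_of_le hSwap.tail_nonneg hle hUp N⟩, ?_⟩
  · exact sub_nonneg.2 (hSummable.sum_le_tsum _ fun t _ => hSwap.tail_nonneg t)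
  · have h := (tendsto_const_nhds (x := (2 / pswap) ^ n * (1 / pgen))).sub hUp.tendsto_sum_nat
    rwa [sub_self] at h
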